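/- Let (S, ⊑) be a cpo, let H be a nonzero finite-dimensional complex Hilbert space, let (Pᵢ, fᵢ)_{i≥1} be a monotone S-labeled sequence of partitions of H, and let P∞ be the eventual supremum of (Pᵢ). Fix p∞ ∈ P∞. Then: (a) for every sequence of cells p₁, p₂, … with pᵢ ∈ Pᵢ, pᵢ not orthogonal to p_{i+1} for all i, and pᵢ not orthogonal to p∞ for all i, the sequence f₁(p₁) ⊑ f₂(p₂) ⊑ ⋯ is monotone increasing and hence has a supremum in S; and (b) for any two such sequences (pᵢ) and (p′ᵢ), one has sup_{i} fᵢ(pᵢ) = sup_{i} fᵢ(p′ᵢ). -/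

import Mathlib

variable {H : Type*} [NormedAddCommGroup H] [InnerProductSpace ℂ H]

/-- Two subspaces of a complex inner product space are orthogonal when every vector of
one is orthogonal to every vector of the other. -/
def Orth (p q : Submodule ℂ H) : Prop :=
  ∀ x ∈ p, ∀ y ∈ q, @inner ℂ H _ x y = 0

/-- A partition of `H` is a set of nonzero closed subspaces of `H` that are pairwise
orthogonal and whose supremum in the complete lattice of closed subspaces of `H`
(i.e. the topological closure of the submodule supremum) is all of `H`. -/
def IsPartition (P : Set (Submodule ℂ H)) : Prop :=
  (∀ p ∈ P, p ≠ ⊥) ∧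
  (∀ p ∈ P, IsClosed (p : Set H)) ∧
  (∀ p ∈ P, ∀ q ∈ P, p ≠ q → Orth p q) ∧
  (sSup P).topologicalClosure = ⊤

/-- `P₁` refines `P₂` when every cell of `P₁` is contained in some cell of `P₂`. -/
def Refines (P₁ P₂ : Set (Submodule ℂ H)) : Prop :=
  ∀ p ∈ P₁, ∃ q ∈ P₂, p ≤ q

/-- A multicell of a partition `P` is the supremum (in the lattice of closed subspaces)
of a possibly empty subset of `P`. -/
def IsMulticell (P : Set (Submodule ℂ H)) (m : Submodule ℂ H) : Prop :=
  ∃ C ⊆ P, m = (sSup C).topologicalClosure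

variable {S : Type*} [PartialOrder S]

/-- A monotone `S`-labeled sequence of partitions of `H`: a sequence `P i` of partitions
together with labelings `f i` of their cells such that for `i ≤ j` and non-orthogonal cells
`p ∈ P i`, `q ∈ P j` one has `f i p ⊑ f j q`. -/
def MonotoneLabeled (P : ℕ → Set (Submodule ℂ H)) (f : ℕ → Submodule ℂ H → S) : Prop :=
  ∀ i j : ℕ, i ≤ j → ∀ p ∈ P i, ∀ q ∈ P j, ¬ Orth p q → f i p ≤ f j q

/-- A partition `Pinf` is the eventual supremum of the sequence `P` if, for all sufficiently
large `n`, `Pinf` is the least upper bound of `{P i : i ≥ n}` in the refinement order. -/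
def IsEventualSup (P : ℕ → Set (Submodule ℂ H)) (Pinf : Set (Submodule ℂ H)) : Prop :=
  ∃ N : ℕ, ∀ n, N ≤ n →
    (∀ i, n ≤ i → Refines (P i) Pinf) ∧
      ∀ Q : Set (Submodule ℂ H), IsPartition Q →
        (∀ i, n ≤ i → Refines (P i) Q) → Refines Pinf Q

/-! Fix an upper bound `s` of the labels along `p'`. In finite dimension the span `E n` of the
cells of level `≥ n` lying in `pinf` with label `≤ s` decreases, so it stabilizes at some `E`,
which is nonzero because it contains the late cells of `p'`. A late cell inside `pinf` that is
not orthogonal to `E` meets such a cell of higher level, so its label is `≤ s` by monotonicity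
of the labeling; hence every late cell inside `pinf` lies in `E` or is orthogonal to it. If `E`
were smaller than `pinf`, splitting `pinf` into `E` and `Eᗮ ⊓ pinf` would give a partition
refined by all late `P i` but not by `Pinf`. So every late cell inside `pinf`, in particular
every late `p i`, has label `≤ s`, and the suprema along `p` and `p'` bound each other. -/

open Submodule

lemma orth_iff_isOrtho {p q : Submodule ℂ H} : Orth p q ↔ p ⟂ q :=
  isOrtho_iff_inner_eq.symm

lemma IsPartition.isOrtho {P : Set (Submodule ℂ H)} (hP : IsPartition P) {p q : Submodule ℂ H}
    (hp : p ∈ P) (hq : q ∈ P) (hpq : p ≠ q) : p ⟂ q :=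
  orth_iff_isOrtho.1 (hP.2.2.1 p hp q hq hpq)

lemma le_of_refines_of_not_orth {P Q : Set (Submodule ℂ H)} (hQ : IsPartition Q)
    (hPQ : Refines P Q) {r q : Submodule ℂ H} (hr : r ∈ P) (hq : q ∈ Q)
    (hrq : ¬ Orth r q) : r ≤ q := by
  obtain ⟨q', hq', hrq'⟩ := hPQ r hr
  obtain rfl : q' = q := by
    by_contra hne
    exact hrq (orth_iff_isOrtho.2 ((hQ.isOrtho hq' hq hne).mono_left hrq'))
  exact hrq'

lemma MonotoneLabeled.monotone_of_chain {P : ℕ → Set (Submodule ℂ H)}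
    {f : ℕ → Submodule ℂ H → S} (hf : MonotoneLabeled P f) {p : ℕ → Submodule ℂ H}
    (hp : ∀ i, p i ∈ P i) (hpc : ∀ i, ¬ Orth (p i) (p (i + 1))) :
    Monotone fun i => f i (p i) :=
  monotone_nat_of_le_succ fun i => hf i (i + 1) i.le_succ _ (hp i) _ (hp (i + 1)) (hpc i)

lemma IsEventualSup.exists_forall_le_of_not_orth {P : ℕ → Set (Submodule ℂ H)}
    {Pinf : Set (Submodule ℂ H)} (hev : IsEventualSup P Pinf) (hPinf : IsPartition Pinf)
    {pinf : Submodule ℂ H} (hpinf : pinf ∈ Pinf) :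
    ∃ N, ∀ i, N ≤ i → ∀ r ∈ P i, ¬ Orth r pinf → r ≤ pinf := by
  obtain ⟨N, hN⟩ := hev
  exact ⟨N, fun i hi r hr => le_of_refines_of_not_orth hPinf ((hN N le_rfl).1 i hi) hr hpinf⟩

section FiniteDimensional

variable [FiniteDimensional ℂ H]

lemma sSup_eq_top_of_isPartition {P : Set (Submodule ℂ H)} (hP : IsPartition P) :
    sSup P = ⊤ := by
  simpa only [(sSup P).closed_of_finiteDimensional.submodule_topologicalClosure_eq] using hP.2.2.2

lemma IsPartition.split {P : Set (Submodule ℂ H)} (hP : IsPartition P) {p E : Submodule ℂ H}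
    (hp : p ∈ P) (hEp : E ≤ p) (hE : E ≠ ⊥) (hD : Eᗮ ⊓ p ≠ ⊥) :
    IsPartition (P \ {p} ∪ {E, Eᗮ ⊓ p}) := by
  have hsplit : ∀ q ∈ ({E, Eᗮ ⊓ p} : Set (Submodule ℂ H)), q ≤ p := by
    rintro q (rfl | rfl)
    exacts [hEp, inf_le_right]
  have horth : ∀ u ∈ P \ {p}, ∀ v ∈ ({E, Eᗮ ⊓ p} : Set _), u ⟂ v := fun u hu v hv =>
    (hP.isOrtho hu.1 hp hu.2).mono_right (hsplit v hv)
  refine ⟨?_, fun q _ => q.closed_of_finiteDimensional, ?_, ?_⟩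
  · rintro q (hq | rfl | rfl)
    exacts [hP.1 q hq.1, hE, hD]
  · rintro u (hu | hu) v (hv | hv) huv <;> rw [orth_iff_isOrtho]
    · exact hP.isOrtho hu.1 hv.1 huv
    · exact horth u hu v hv
    · exact (horth v hv u hu).symm
    · rcases hu with rfl | rfl <;> rcases hv with rfl | rfl
      · exact absurd rfl huv
      · exact (isOrtho_orthogonal_right u).mono_right inf_le_left
      · exact (isOrtho_orthogonal_left v).mono_left inf_le_left
      · exact absurd rfl huv
  · have hcell : sSup ({E, Eᗮ ⊓ p} : Set (Submodule ℂ H)) = p := by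
      rw [sSup_pair, sup_orthogonal_inf_of_hasOrthogonalProjection hEp]
    rw [sSup_union, hcell, sup_comm, ← sSup_insert, Set.insert_sdiff_singleton,
      Set.insert_eq_of_mem hp, sSup_eq_top_of_isPartition hP,
      (⊤ : Submodule ℂ H).closed_of_finiteDimensional.submodule_topologicalClosure_eq]

lemma IsEventualSup.eq_of_forall_le_or_orth {P : ℕ → Set (Submodule ℂ H)}
    {Pinf : Set (Submodule ℂ H)} (hev : IsEventualSup P Pinf) (hPinf : IsPartition Pinf)
    {pinf E : Submodule ℂ H} (hpinf : pinf ∈ Pinf) (hE : E ≠ ⊥) (hEp : E ≤ pinf) (n : ℕ)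
    (hcells : ∀ i, n ≤ i → ∀ r ∈ P i, r ≤ pinf → r ≤ E ∨ Orth r E) :
    E = pinf := by
  by_cases hD : Eᗮ ⊓ pinf = ⊥
  · rw [← sup_orthogonal_inf_of_hasOrthogonalProjection hEp, hD, sup_bot_eq]
  obtain ⟨N, hN⟩ := hev
  have hrefines :
      ∀ i, max n N ≤ i → Refines (P i) (Pinf \ {pinf} ∪ {E, Eᗮ ⊓ pinf}) := by
    intro i hi r hr
    obtain ⟨q, hq, hrq⟩ := (hN N le_rfl).1 i (le_of_max_le_right hi) r hr
    by_cases hqp : q = pinf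
    · subst hqp
      rcases hcells i (le_of_max_le_left hi) r hr hrq with hrE | hrE
      · exact ⟨E, Or.inr (Or.inl rfl), hrE⟩
      · exact ⟨Eᗮ ⊓ q, Or.inr (Or.inr rfl), le_inf (orth_iff_isOrtho.1 hrE).le hrq⟩
    · exact ⟨q, Or.inl ⟨hq, hqp⟩, hrq⟩
  obtain ⟨q, hq, hpq⟩ := (hN (max n N) (le_max_right n N)).2 _ (hPinf.split hpinf hEp hE hD)
    hrefines pinf hpinf
  exfalso
  rcases hq with ⟨hq, hqp⟩ | hqE | hqD
  · exact hPinf.1 pinf hpinf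
      (isOrtho_self.1 ((hPinf.isOrtho hq hpinf hqp).mono_left hpq))
  · rw [hqE] at hpq
    exact hD (isOrtho_self.1
      ((isOrtho_orthogonal_left E).mono inf_le_left (inf_le_right.trans hpq)))
  · rw [Set.mem_singleton_iff.1 hqD] at hpq
    exact hE (isOrtho_self.1
      ((isOrtho_orthogonal_right E).mono le_rfl ((hEp.trans hpq).trans inf_le_left)))

lemma exists_forall_label_le {P : ℕ → Set (Submodule ℂ H)} (hP : ∀ i, IsPartition (P i))
    {f : ℕ → Submodule ℂ H → S} (hf : MonotoneLabeled P f) {Pinf : Set (Submodule ℂ H)}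
    (hPinf : IsPartition Pinf) (hev : IsEventualSup P Pinf) {pinf : Submodule ℂ H}
    (hpinf : pinf ∈ Pinf) {s : S}
    (hlate : ∀ n, ∃ a, n ≤ a ∧ ∃ r ∈ P a, r ≤ pinf ∧ f a r ≤ s) :
    ∃ n, ∀ i, n ≤ i → ∀ r ∈ P i, r ≤ pinf → f i r ≤ s := by
  set E : ℕ → Submodule ℂ H := fun n =>
    sSup {r | ∃ a, n ≤ a ∧ r ∈ P a ∧ r ≤ pinf ∧ f a r ≤ s}
  have hE_anti : Antitone E := fun n m hnm =>
    sSup_le_sSup fun r ⟨a, ha, hr⟩ => ⟨a, hnm.trans ha, hr⟩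
  obtain ⟨n, hn⟩ :=
    IsArtinian.monotone_stabilizes ⟨fun n => OrderDual.toDual (E n), hE_anti⟩
  have hbad : ∀ i, n ≤ i → ∀ r ∈ P i, ¬ f i r ≤ s → Orth r (E n) := by
    intro i hi r hr hrs
    rw [orth_iff_isOrtho, show E n = E i from hn i hi, isOrtho_sSup_right]
    rintro t ⟨c, hic, htc, -, hts⟩
    by_contra hrt
    exact hrs ((hf i c hic r hr t htc (mt orth_iff_isOrtho.1 hrt)).trans hts)
  have hEn_ne : E n ≠ ⊥ := by
    obtain ⟨a, ha, r, hr, hrp, hrs⟩ := hlate n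
    exact fun h => (hP a).1 r hr (le_bot_iff.1 (h ▸ le_sSup ⟨a, ha, hr, hrp, hrs⟩))
  have hEn : E n = pinf := hev.eq_of_forall_le_or_orth hPinf hpinf hEn_ne
    (sSup_le fun _ ⟨_, _, _, hrp, _⟩ => hrp) n fun i hi r hr hrp =>
      (em (f i r ≤ s)).imp (fun hrs => le_sSup ⟨i, hi, hr, hrp, hrs⟩) (hbad i hi r hr)
  refine ⟨n, fun i hi r hr hrp => by_contra fun hrs => (hP i).1 r hr ?_⟩
  exact isOrtho_self.1 ((orth_iff_isOrtho.1 (hEn ▸ hbad i hi r hr hrs)).mono_right hrp)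

lemma upperBounds_range_label_subset {P : ℕ → Set (Submodule ℂ H)}
    (hP : ∀ i, IsPartition (P i)) {f : ℕ → Submodule ℂ H → S} (hf : MonotoneLabeled P f)
    {Pinf : Set (Submodule ℂ H)} (hPinf : IsPartition Pinf) (hev : IsEventualSup P Pinf)
    {pinf : Submodule ℂ H} (hpinf : pinf ∈ Pinf) {p p' : ℕ → Submodule ℂ H}
    (hp : ∀ i, p i ∈ P i) (hpc : ∀ i, ¬ Orth (p i) (p (i + 1)))
    (hpo : ∀ i, ¬ Orth (p i) pinf) (hp' : ∀ i, p' i ∈ P i)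
    (hpo' : ∀ i, ¬ Orth (p' i) pinf) :
    upperBounds (Set.range fun i => f i (p' i)) ⊆
      upperBounds (Set.range fun i => f i (p i)) := by
  intro s hs
  obtain ⟨N, hN⟩ := hev.exists_forall_le_of_not_orth hPinf hpinf
  obtain ⟨n, hn⟩ := exists_forall_label_le hP hf hPinf hev hpinf fun m =>
    ⟨max m N, le_max_left m N, p' _, hp' _, hN _ (le_max_right m N) _ (hp' _) (hpo' _),
      hs ⟨_, rfl⟩⟩
  rintro _ ⟨i, rfl⟩
  set j := max i (max n N)
  have hnj : n ≤ j := le_max_of_le_right (le_max_left n N)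
  have hNj : N ≤ j := le_max_of_le_right (le_max_right n N)
  calc f i (p i) ≤ f j (p j) := hf.monotone_of_chain hp hpc (le_max_left _ _)
    _ ≤ s := hn j hnj _ (hp j) (hN j hNj _ (hp j) (hpo j))

end FiniteDimensional

theorem label_sup_well_defined_general
    (hcpo : ∀ g : ℕ → S, Monotone g → ∃ s, IsLUB (Set.range g) s)
    [FiniteDimensional ℂ H]
    (P : ℕ → Set (Submodule ℂ H)) (hP : ∀ i, IsPartition (P i))
    (f : ℕ → Submodule ℂ H → S) (hf : MonotoneLabeled P f)
    (Pinf : Set (Submodule ℂ H)) (hPinf : IsPartition Pinf)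
    (hev : IsEventualSup P Pinf)
    (pinf : Submodule ℂ H) (hpinf : pinf ∈ Pinf) :
    (∀ p : ℕ → Submodule ℂ H, (∀ i, p i ∈ P i) →
        (∀ i, ¬ Orth (p i) (p (i + 1))) → (∀ i, ¬ Orth (p i) pinf) →
        Monotone (fun i => f i (p i)) ∧ ∃ s, IsLUB (Set.range fun i => f i (p i)) s) ∧
      ∀ p p' : ℕ → Submodule ℂ H,
        (∀ i, p i ∈ P i) → (∀ i, ¬ Orth (p i) (p (i + 1))) → (∀ i, ¬ Orth (p i) pinf) →
        (∀ i, p' i ∈ P i) → (∀ i, ¬ Orth (p' i) (p' (i + 1))) → (∀ i, ¬ Orth (p' i) pinf) →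
        ∀ s s' : S, IsLUB (Set.range fun i => f i (p i)) s →
          IsLUB (Set.range fun i => f i (p' i)) s' → s = s' := by
  refine ⟨fun p hp hpc _ => ⟨hf.monotone_of_chain hp hpc, hcpo _ (hf.monotone_of_chain hp hpc)⟩,
    fun p p' hp hpc hpo hp' hpc' hpo' s s' hs hs' => le_antisymm ?_ ?_⟩
  · exact hs.2 (upperBounds_range_label_subset hP hf hPinf hev hpinf hp hpc hpo hp' hpo' hs'.1)
  · exact hs'.2 (upperBounds_range_label_subset hP hf hPinf hev hpinf hp' hpc' hpo' hp hpo hs.1)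

/-- Let `S` be a cpo, `H` a nonzero finite-dimensional complex Hilbert
space, `(P i, f i)` a monotone `S`-labeled sequence of partitions of `H`, `Pinf` the eventual
supremum of `(P i)`, and `pinf ∈ Pinf`.  (a) For every sequence of cells `p i ∈ P i` with
consecutive cells not orthogonal and each `p i` not orthogonal to `pinf`, the sequence
`f i (p i)` is monotone increasing and has a supremum in `S`.  (b) Any two such sequences
have the same supremum. -/
theorem label_sup_well_defined
    (hcpo : ∀ g : ℕ → S, Monotone g → ∃ s, IsLUB (Set.range g) s)
    [FiniteDimensional ℂ H] [Nontrivial H]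
    (P : ℕ → Set (Submodule ℂ H)) (hP : ∀ i, IsPartition (P i))
    (f : ℕ → Submodule ℂ H → S) (hf : MonotoneLabeled P f)
    (Pinf : Set (Submodule ℂ H)) (hPinf : IsPartition Pinf)
    (hev : IsEventualSup P Pinf)
    (pinf : Submodule ℂ H) (hpinf : pinf ∈ Pinf) :
    (∀ p : ℕ → Submodule ℂ H, (∀ i, p i ∈ P i) →
        (∀ i, ¬ Orth (p i) (p (i + 1))) → (∀ i, ¬ Orth (p i) pinf) →
        Monotone (fun i => f i (p i)) ∧ ∃ s, IsLUB (Set.range fun i => f i (p i)) s) ∧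
      ∀ p p' : ℕ → Submodule ℂ H,
        (∀ i, p i ∈ P i) → (∀ i, ¬ Orth (p i) (p (i + 1))) → (∀ i, ¬ Orth (p i) pinf) →
        (∀ i, p' i ∈ P i) → (∀ i, ¬ Orth (p' i) (p' (i + 1))) → (∀ i, ¬ Orth (p' i) pinf) →
        ∀ s s' : S, IsLUB (Set.range fun i => f i (p i)) s →
          IsLUB (Set.range fun i => f i (p' i)) s' → s = s' :=
  label_sup_well_defined_general hcpo P hP f hf Pinf hPinf hev pinf hpinf
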